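/- For all x, y in the unit ball 𝔹ⁿ, tanh(ρ(x,y)/4) ≤ s_{𝔹ⁿ}(x,y) ≤ p_{𝔹ⁿ}(x,y) ≤ tanh(ρ(x,y)/2) ≤ 2·tanh(ρ(x,y)/4), where ρ is the hyperbolic metric of 𝔹ⁿ. -/

import Mathlib

open Metric Set

/-- hyperbolic metric of the unit ball, via sinh(ρ/2) = |x-y|/(√(1-|x|²)√(1-|y|²)) -/
noncomputable def rhoB {n : ℕ} (x y : EuclideanSpace ℝ (Fin n)) : ℝ :=
  2 * Real.arsinh (dist x y / Real.sqrt ((1 - ‖x‖ ^ 2) * (1 - ‖y‖ ^ 2)))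

noncomputable def sB {n : ℕ} (x y : EuclideanSpace ℝ (Fin n)) : ℝ :=
  ⨆ z : Metric.sphere (0 : EuclideanSpace ℝ (Fin n)) 1,
    dist x y / (dist x (z : EuclideanSpace ℝ (Fin n)) + dist (z : EuclideanSpace ℝ (Fin n)) y)

noncomputable def pB {n : ℕ} (x y : EuclideanSpace ℝ (Fin n)) : ℝ :=
  dist x y / Real.sqrt (dist x y ^ 2 + 4 * (1 - ‖x‖) * (1 - ‖y‖))

open scoped RealInnerProductSpace

/-!
Write `d = |x - y|` and `A = (1 - |x|²)(1 - |y|²)`. From `sinh (ρ/2) = d / √A` one gets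
`tanh (ρ/2) = d / √(A + d²)` and `tanh (ρ/4) = d / (√A + √(A + d²))`, so everything reduces to
estimates of `|x - z| + |z - y|` for `|z| = 1`.

For the lower bound on `s`, assume `|y| ≤ |x|` and take `z = x / |x|`: then `|x - z| = 1 - |x|`
and `|z - |x| y|² = A + d²`, so `|x - z| + |z - y| ≤ (1 - |x|)(1 + |y|) + √(A + d²)`, and
`(1 - |x|)(1 + |y|) ≤ √A`. For `s ≤ p`, put `u = x - z`, `v = y - z`; then
`|u||v| + ⟨u, v⟩ ≥ 2⟨z, u⟩⟨z, v⟩ ≥ 2(1 - |x|)(1 - |y|)`, which bounds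
`(|u| + |v|)² = d² + 2(|u||v| + ⟨u, v⟩)` from below. Finally `p ≤ tanh (ρ/2)` because
`A ≤ 4(1 - |x|)(1 - |y|)`, and `tanh (ρ/2) ≤ 2 tanh (ρ/4)` because `√A ≤ √(A + d²)`.
-/

namespace Real

lemma tanh_half (w : ℝ) : tanh (w / 2) = sinh w / (1 + cosh w) := by
  have hw : w = 2 * (w / 2) := by ring
  have hc : 0 < cosh (w / 2) := cosh_pos _
  rw [tanh_eq_sinh_div_cosh, hw, sinh_two_mul, cosh_two_mul, ← hw,
    show 1 + (cosh (w / 2) ^ 2 + sinh (w / 2) ^ 2) = 2 * cosh (w / 2) ^ 2 by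
      rw [cosh_sq]; ring]
  field_simp

lemma sqrt_one_add_div_sq {c : ℝ} (hc : 0 < c) (d : ℝ) :
    √(1 + (d / c) ^ 2) = √(c ^ 2 + d ^ 2) / c := by
  rw [show 1 + (d / c) ^ 2 = (c ^ 2 + d ^ 2) / c ^ 2 by field_simp, sqrt_div' _ (sq_nonneg c),
    sqrt_sq hc.le]

lemma tanh_arsinh_div {c : ℝ} (hc : 0 < c) (d : ℝ) :
    tanh (arsinh (d / c)) = d / √(c ^ 2 + d ^ 2) := by
  have : 0 < √(c ^ 2 + d ^ 2) := sqrt_pos.2 (by positivity)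
  rw [tanh_arsinh, sqrt_one_add_div_sq hc]
  field_simp

lemma tanh_half_arsinh_div {c : ℝ} (hc : 0 < c) (d : ℝ) :
    tanh (arsinh (d / c) / 2) = d / (c + √(c ^ 2 + d ^ 2)) := by
  have : 0 < c + √(c ^ 2 + d ^ 2) := by positivity
  rw [tanh_half, sinh_arsinh, cosh_arsinh, sqrt_one_add_div_sq hc]
  field_simp

lemma one_sub_mul_one_add_le_sqrt {a b : ℝ} (hb : 0 ≤ b) (hba : b ≤ a) (ha : a ≤ 1) :
    (1 - a) * (1 + b) ≤ √((1 - a ^ 2) * (1 - b ^ 2)) := by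
  apply le_sqrt_of_sq_le
  nlinarith [mul_nonneg (mul_nonneg (sub_nonneg.2 ha) (by linarith : 0 ≤ 1 + b))
    (sub_nonneg.2 hba)]

end Real

section InnerProductSpace

variable {E : Type*} [NormedAddCommGroup E] [InnerProductSpace ℝ E]

lemma two_mul_inner_mul_inner_le_norm_mul_norm_add_inner {w : E} (hw : ‖w‖ = 1) (u v : E) :
    2 * (⟪w, u⟫ * ⟪w, v⟫) ≤ ‖u‖ * ‖v‖ + ⟪u, v⟫ := by
  rcases eq_or_ne u 0 with rfl | hu
  · simp
  rcases eq_or_ne v 0 with rfl | hv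
  · simp
  have huv : 0 < ‖u‖ * ‖v‖ := mul_pos (norm_pos_iff.2 hu) (norm_pos_iff.2 hv)
  -- Cauchy–Schwarz against `w` for `‖v‖ • u + ‖u‖ • v`, whose squared norm is
  -- `2‖u‖‖v‖(‖u‖‖v‖ + ⟪u, v⟫)`; then AM-GM on the left-hand side.
  have hcs :
      (‖v‖ * ⟪w, u⟫ + ‖u‖ * ⟪w, v⟫) ^ 2 ≤ 2 * (‖u‖ * ‖v‖) * (‖u‖ * ‖v‖ + ⟪u, v⟫) := by
    have h := abs_real_inner_le_norm w (‖v‖ • u + ‖u‖ • v)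
    rw [hw, one_mul, inner_add_right, real_inner_smul_right, real_inner_smul_right] at h
    calc _ ≤ ‖‖v‖ • u + ‖u‖ • v‖ ^ 2 := sq_le_sq' (abs_le.1 h).1 (abs_le.1 h).2
      _ = _ := by
        rw [norm_add_sq_real, norm_smul, norm_smul, real_inner_smul_left, real_inner_smul_right,
          norm_norm, norm_norm]
        ring
  nlinarith [sq_nonneg (‖v‖ * ⟪w, u⟫ - ‖u‖ * ⟪w, v⟫)]

lemma inner_sub_self_le {z : E} (hz : ‖z‖ = 1) (x : E) : ⟪z, x - z⟫ ≤ ‖x‖ - 1 := by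
  have := real_inner_le_norm z x
  rw [hz, one_mul] at this
  rw [inner_sub_right, real_inner_self_eq_norm_sq, hz]
  linarith

lemma sq_dist_add_four_mul_le_sq_dist_add_dist {x y z : E} (hx : ‖x‖ ≤ 1) (hy : ‖y‖ ≤ 1)
    (hz : ‖z‖ = 1) :
    dist x y ^ 2 + 4 * (1 - ‖x‖) * (1 - ‖y‖) ≤ (dist x z + dist z y) ^ 2 := by
  have key := two_mul_inner_mul_inner_le_norm_mul_norm_add_inner hz (x - z) (y - z)
  have hxy : dist x y ^ 2 = ‖x - z‖ ^ 2 - 2 * ⟪x - z, y - z⟫ + ‖y - z‖ ^ 2 := by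
    rw [dist_eq_norm, ← norm_sub_sq_real, sub_sub_sub_cancel_right]
  rw [hxy, dist_eq_norm x z, dist_comm z y, dist_eq_norm y z]
  have hzx := inner_sub_self_le hz x
  have hzy := inner_sub_self_le hz y
  nlinarith [mul_le_mul_of_nonpos_of_nonpos hzx hzy (by linarith) (by linarith)]

lemma norm_sub_smul_sq {z : E} (hz : ‖z‖ = 1) (a : ℝ) (y : E) :
    ‖z - a • y‖ ^ 2 = ‖a • z - y‖ ^ 2 + (1 - a ^ 2) * (1 - ‖y‖ ^ 2) := by
  rw [norm_sub_sq_real, norm_sub_sq_real, real_inner_smul_left, real_inner_smul_right, norm_smul,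
    norm_smul, hz, Real.norm_eq_abs, mul_pow, mul_pow, sq_abs]
  ring

lemma exists_mem_sphere_dist_add_dist_le {x y : E} (hx : ‖x‖ < 1) (hy : ‖y‖ < 1) (hxy : x ≠ y) :
    ∃ z ∈ sphere (0 : E) 1, dist x z + dist z y ≤
      √((1 - ‖x‖ ^ 2) * (1 - ‖y‖ ^ 2)) + √((1 - ‖x‖ ^ 2) * (1 - ‖y‖ ^ 2) + dist x y ^ 2) := by
  wlog hyx : ‖y‖ ≤ ‖x‖ generalizing x y
  · obtain ⟨z, hz, h⟩ := this hy hx hxy.symm (le_of_not_ge hyx)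
    refine ⟨z, hz, ?_⟩
    rwa [dist_comm x z, dist_comm z y, add_comm (dist z x), mul_comm (1 - ‖x‖ ^ 2), dist_comm x y]
  have hx0 : x ≠ 0 := by
    rintro rfl
    exact hxy (norm_le_zero_iff.1 (norm_zero (E := E) ▸ hyx)).symm
  set a := ‖x‖
  set z := a⁻¹ • x
  have hz : ‖z‖ = 1 := norm_smul_inv_norm hx0
  have hxz : x = a • z := (smul_inv_smul₀ (norm_ne_zero_iff.2 hx0) x).symm
  refine ⟨z, mem_sphere_zero_iff_norm.2 hz, ?_⟩
  have hdxz : dist x z = 1 - a := by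
    rw [dist_eq_norm, hxz, show a • z - z = (a - 1) • z by rw [sub_smul, one_smul], norm_smul, hz,
      mul_one, Real.norm_eq_abs, abs_of_nonpos (by linarith)]
    ring
  have hdzy : dist z y ≤ √((1 - a ^ 2) * (1 - ‖y‖ ^ 2) + dist x y ^ 2) + (1 - a) * ‖y‖ := by
    have hzay : ‖z - a • y‖ = √((1 - a ^ 2) * (1 - ‖y‖ ^ 2) + dist x y ^ 2) := by
      rw [← Real.sqrt_sq (norm_nonneg _), norm_sub_smul_sq hz, ← hxz, ← dist_eq_norm, add_comm]
    have hayy : ‖a • y - y‖ = (1 - a) * ‖y‖ := by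
      rw [show a • y - y = (a - 1) • y by rw [sub_smul, one_smul], norm_smul, Real.norm_eq_abs,
        abs_of_nonpos (by linarith)]
      ring
    rw [dist_eq_norm, ← hzay, ← hayy]
    exact norm_sub_le_norm_sub_add_norm_sub z (a • y) y
  have := Real.one_sub_mul_one_add_le_sqrt (norm_nonneg y) hyx hx.le
  linarith

end InnerProductSpace

section UnitBall

variable {n : ℕ} {x y : EuclideanSpace ℝ (Fin n)}

lemma one_sub_sq_mul_one_sub_sq_pos (hx : ‖x‖ < 1) (hy : ‖y‖ < 1) :
    0 < (1 - ‖x‖ ^ 2) * (1 - ‖y‖ ^ 2) := by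
  have := norm_nonneg x
  have := norm_nonneg y
  apply mul_pos <;> nlinarith

lemma tanh_rhoB_div_two (hx : ‖x‖ < 1) (hy : ‖y‖ < 1) :
    Real.tanh (rhoB x y / 2) =
      dist x y / √((1 - ‖x‖ ^ 2) * (1 - ‖y‖ ^ 2) + dist x y ^ 2) := by
  have hA := one_sub_sq_mul_one_sub_sq_pos hx hy
  rw [rhoB, mul_div_cancel_left₀ _ two_ne_zero, Real.tanh_arsinh_div (Real.sqrt_pos.2 hA),
    Real.sq_sqrt hA.le]

lemma tanh_rhoB_div_four (hx : ‖x‖ < 1) (hy : ‖y‖ < 1) :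
    Real.tanh (rhoB x y / 4) = dist x y /
      (√((1 - ‖x‖ ^ 2) * (1 - ‖y‖ ^ 2)) + √((1 - ‖x‖ ^ 2) * (1 - ‖y‖ ^ 2) + dist x y ^ 2)) := by
  have hA := one_sub_sq_mul_one_sub_sq_pos hx hy
  rw [show rhoB x y / 4 = rhoB x y / 2 / 2 by ring, rhoB, mul_div_cancel_left₀ _ two_ne_zero,
    Real.tanh_half_arsinh_div (Real.sqrt_pos.2 hA), Real.sq_sqrt hA.le]

lemma sB_nonneg (x y : EuclideanSpace ℝ (Fin n)) : 0 ≤ sB x y :=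
  Real.iSup_nonneg fun _ ↦ by positivity

lemma div_dist_add_dist_le_sB {z : EuclideanSpace ℝ (Fin n)} (hz : z ∈ sphere 0 1) :
    dist x y / (dist x z + dist z y) ≤ sB x y := by
  refine le_ciSup (f := fun w : sphere (0 : EuclideanSpace ℝ (Fin n)) 1 ↦
    dist x y / (dist x (w : EuclideanSpace ℝ (Fin n)) + dist (w : EuclideanSpace ℝ (Fin n)) y))
    ⟨1, ?_⟩ ⟨z, hz⟩
  rintro _ ⟨w, rfl⟩
  exact div_le_one_of_le₀ (dist_triangle x w y) (by positivity)

lemma tanh_rhoB_div_four_le_sB (hx : ‖x‖ < 1) (hy : ‖y‖ < 1) :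
    Real.tanh (rhoB x y / 4) ≤ sB x y := by
  rcases eq_or_ne x y with rfl | hxy
  · simpa [rhoB] using sB_nonneg x x
  obtain ⟨z, hz, hzxy⟩ := exists_mem_sphere_dist_add_dist_le hx hy hxy
  rw [tanh_rhoB_div_four hx hy]
  calc _ ≤ dist x y / (dist x z + dist z y) :=
        div_le_div_of_nonneg_left dist_nonneg
          ((dist_pos.2 hxy).trans_le (dist_triangle x z y)) hzxy
    _ ≤ sB x y := div_dist_add_dist_le_sB hz

lemma sB_le_pB (hx : ‖x‖ < 1) (hy : ‖y‖ < 1) : sB x y ≤ pB x y := by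
  have hpos : 0 < dist x y ^ 2 + 4 * (1 - ‖x‖) * (1 - ‖y‖) := by
    have : 0 < (1 - ‖x‖) * (1 - ‖y‖) := mul_pos (by linarith) (by linarith)
    positivity
  refine Real.iSup_le (fun z ↦ div_le_div_of_nonneg_left dist_nonneg (Real.sqrt_pos.2 hpos) ?_)
    (by unfold pB; positivity)
  exact (Real.sqrt_le_left (by positivity)).2
    (sq_dist_add_four_mul_le_sq_dist_add_dist hx.le hy.le (mem_sphere_zero_iff_norm.1 z.2))

lemma pB_le_tanh_rhoB_div_two (hx : ‖x‖ < 1) (hy : ‖y‖ < 1) :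
    pB x y ≤ Real.tanh (rhoB x y / 2) := by
  have hA := one_sub_sq_mul_one_sub_sq_pos hx hy
  rw [tanh_rhoB_div_two hx hy, pB]
  refine div_le_div_of_nonneg_left dist_nonneg (Real.sqrt_pos.2 (by positivity))
    (Real.sqrt_le_sqrt ?_)
  have := norm_nonneg x
  have := norm_nonneg y
  -- `(1 - ‖x‖²)(1 - ‖y‖²) = (1 - ‖x‖)(1 - ‖y‖)(1 + ‖x‖)(1 + ‖y‖)` with `(1 + ‖x‖)(1 + ‖y‖) ≤ 4`.
  nlinarith [mul_nonneg (mul_nonneg (by linarith : (0 : ℝ) ≤ 1 - ‖x‖)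
    (by linarith : (0 : ℝ) ≤ 1 - ‖y‖)) (by nlinarith : (0 : ℝ) ≤ 4 - (1 + ‖x‖) * (1 + ‖y‖))]

lemma tanh_rhoB_div_two_le_two_mul_tanh_rhoB_div_four (hx : ‖x‖ < 1) (hy : ‖y‖ < 1) :
    Real.tanh (rhoB x y / 2) ≤ 2 * Real.tanh (rhoB x y / 4) := by
  have hA := one_sub_sq_mul_one_sub_sq_pos hx hy
  have hsqrt := Real.sqrt_le_sqrt (le_add_of_nonneg_right (sq_nonneg (dist x y)) :
    (1 - ‖x‖ ^ 2) * (1 - ‖y‖ ^ 2) ≤ _)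
  rw [tanh_rhoB_div_two hx hy, tanh_rhoB_div_four hx hy]
  calc _ ≤ dist x y /
        ((√((1 - ‖x‖ ^ 2) * (1 - ‖y‖ ^ 2)) +
          √((1 - ‖x‖ ^ 2) * (1 - ‖y‖ ^ 2) + dist x y ^ 2)) / 2) :=
        div_le_div_of_nonneg_left dist_nonneg (by positivity) (by linarith)
    _ = _ := by rw [div_div_eq_mul_div, mul_comm, mul_div_assoc]

end UnitBall

theorem stmt7 {n : ℕ} (x y : EuclideanSpace ℝ (Fin n))
    (hx : x ∈ Metric.ball (0 : EuclideanSpace ℝ (Fin n)) 1)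
    (hy : y ∈ Metric.ball (0 : EuclideanSpace ℝ (Fin n)) 1) :
    Real.tanh (rhoB x y / 4) ≤ sB x y ∧ sB x y ≤ pB x y ∧
    pB x y ≤ Real.tanh (rhoB x y / 2) ∧
    Real.tanh (rhoB x y / 2) ≤ 2 * Real.tanh (rhoB x y / 4) := by
  rw [mem_ball_zero_iff] at hx hy
  exact ⟨tanh_rhoB_div_four_le_sB hx hy, sB_le_pB hx hy, pB_le_tanh_rhoB_div_two hx hy,
    tanh_rhoB_div_two_le_two_mul_tanh_rhoB_div_four hx hy⟩
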